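/- Let k > 1 and let f : ℝ → ℝ be a positive, continuously differentiable function with f(0) > k. Suppose R* is the unique point of (0, (k−1)/k) satisfying f(R*) = (k−1)/((k−1)/k − R*), let I* = R*/(k−1), and suppose f'(R*) ≠ g'(R*) where g(R) = (k−1)/((k−1)/k − R). Then for every pair of differentiable functions I, R : ℝ → ℝ satisfying, for all t ≥ 0, I'(t) = I(t)·(f(R(t))·(1 − I(t) − R(t)) − k) and R'(t) = (k−1)·I(t) − R(t), with I(0) > 0, R(0) ≥ 0 and I(0) + R(0) ≤ 1, one has (I(t), R(t)) → (I*, R*) as t → ∞. -/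

import Mathlib

/-!
Put `h(R) = k(k-1) - f(R)((k-1) - kR)`, so that the endemic equilibria
are the zeros of `h` on `(0, (k-1)/k)`. Since `h(0) < 0`, `h > 0` on `[(k-1)/k, ∞)` and `R*` is
the only zero, `(R - R*) h(R) > 0` for `0 ≤ R ≠ R*`. With `I* = R*/(k-1)` and
  `V(I, R) = (k-1)² (I - I* - I* log(I/I*)) + ∫_{R*}^R (h(s) + f(s)(s - R*)) ds`
one computes along solutions, using only `(k-1) I* = R*`,
  `dV/dt = -f(R) ((k-1)I - R)² - (R - R*) h(R)`,
which is negative away from `(I*, R*)`. The triangle `I > 0, R ≥ 0, I + R ≤ 1` is forward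
invariant and `V → ∞` as `I → 0`, so the trajectory stays in a compact box `[m, 1] × [0, 1]`,
where Lyapunov's argument applies.
-/

open Set Filter Topology Real

lemma monotoneOn_Ici_of_hasDerivAt_nonneg {G G' : ℝ → ℝ} {a : ℝ}
    (hG : ∀ t, a ≤ t → HasDerivAt G (G' t) t) (hG' : ∀ t, a ≤ t → 0 ≤ G' t) :
    MonotoneOn G (Ici a) :=
  monotoneOn_of_hasDerivWithinAt_nonneg (convex_Ici a)
    (fun t ht => (hG t ht).continuousAt.continuousWithinAt)
    (fun t ht => (hG t (interior_subset ht)).hasDerivWithinAt)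
    (fun t ht => hG' t (interior_subset ht))

lemma antitoneOn_Ici_of_hasDerivAt_nonpos {G G' : ℝ → ℝ} {a : ℝ}
    (hG : ∀ t, a ≤ t → HasDerivAt G (G' t) t) (hG' : ∀ t, a ≤ t → G' t ≤ 0) :
    AntitoneOn G (Ici a) :=
  antitoneOn_of_hasDerivWithinAt_nonpos (convex_Ici a)
    (fun t ht => (hG t ht).continuousAt.continuousWithinAt)
    (fun t ht => (hG t (interior_subset ht)).hasDerivWithinAt)
    (fun t ht => hG' t (interior_subset ht))

lemma mul_exp_integral_le_of_hasDerivAt {u a b : ℝ → ℝ} (ha : Continuous a)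
    (hu : ∀ t, 0 ≤ t → HasDerivAt u (a t * u t + b t) t) (hb : ∀ t, 0 ≤ t → 0 ≤ b t)
    {t : ℝ} (ht : 0 ≤ t) : u 0 * exp (∫ s in (0 : ℝ)..t, a s) ≤ u t := by
  set A : ℝ → ℝ := fun t => ∫ s in (0 : ℝ)..t, a s
  have hA : ∀ t, HasDerivAt A (a t) t := fun t => (ha.integral_hasStrictDerivAt 0 t).hasDerivAt
  have hmono : MonotoneOn (fun t => u t * exp (-A t)) (Ici 0) := by
    refine monotoneOn_Ici_of_hasDerivAt_nonneg (fun t ht => (hu t ht).mul (hA t).neg.exp)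
      fun t ht => ?_
    rw [Pi.neg_apply, show (a t * u t + b t) * exp (-A t) + u t * (exp (-A t) * -a t)
      = b t * exp (-A t) by ring]
    exact mul_nonneg (hb t ht) (exp_pos _).le
  have h := hmono self_mem_Ici ht ht
  simp only [A, intervalIntegral.integral_same, neg_zero, exp_zero, mul_one] at h
  calc u 0 * exp (A t) ≤ u t * exp (-A t) * exp (A t) := by gcongr
    _ = u t := by rw [mul_assoc, ← exp_add, neg_add_cancel, exp_zero, mul_one]

lemma IsPreconnected.pos_of_forall_ne_zero {X : Type*} [TopologicalSpace X] {s : Set X}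
    (hs : IsPreconnected s) {h : X → ℝ} (hh : ContinuousOn h s) (hne : ∀ x ∈ s, h x ≠ 0)
    {a b : X} (ha : a ∈ s) (hb : b ∈ s) (hpos : 0 < h a) : 0 < h b := by
  by_contra! hb'
  obtain ⟨x, hx, hx0⟩ := hs.intermediate_value hb ha hh ⟨hb', hpos.le⟩
  exact hne x hx hx0

lemma lt_of_hasDerivAt_of_sub_mul_pos {Φ φ : ℝ → ℝ} {c y : ℝ}
    (hΦ : ∀ s ∈ uIcc c y, HasDerivAt Φ (φ s) s) (hy : y ≠ c)
    (hsign : ∀ s ∈ uIcc c y, s ≠ c → 0 < (s - c) * φ s) : Φ c < Φ y := by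
  have hcont : ContinuousOn Φ (uIcc c y) := fun s hs => (hΦ s hs).continuousAt.continuousWithinAt
  rcases hy.lt_or_gt with hlt | hgt
  · rw [uIcc_of_ge hlt.le] at hΦ hsign hcont
    refine strictAntiOn_of_deriv_neg (convex_Icc y c) hcont (fun s hs => ?_)
      (left_mem_Icc.2 hlt.le) (right_mem_Icc.2 hlt.le) hlt
    rw [interior_Icc] at hs
    rw [(hΦ s (Ioo_subset_Icc_self hs)).deriv]
    exact neg_of_mul_pos_right (hsign s (Ioo_subset_Icc_self hs) hs.2.ne)
      (sub_nonpos.2 hs.2.le)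
  · rw [uIcc_of_le hgt.le] at hΦ hsign hcont
    refine strictMonoOn_of_deriv_pos (convex_Icc c y) hcont (fun s hs => ?_)
      (left_mem_Icc.2 hgt.le) (right_mem_Icc.2 hgt.le) hgt
    rw [interior_Icc] at hs
    rw [(hΦ s (Ioo_subset_Icc_self hs)).deriv]
    exact pos_of_mul_pos_right (hsign s (Ioo_subset_Icc_self hs) hs.1.ne')
      (sub_nonneg.2 hs.1.le)

noncomputable def volterra (a x : ℝ) : ℝ := x - a - a * (log x - log a)

@[simp] lemma volterra_self (a : ℝ) : volterra a a = 0 := by simp [volterra]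

lemma volterra_nonneg {a x : ℝ} (ha : 0 < a) (hx : 0 < x) : 0 ≤ volterra a x := by
  have h := mul_le_mul_of_nonneg_left (log_le_sub_one_of_pos (div_pos hx ha)) ha.le
  rw [log_div hx.ne' ha.ne', mul_sub_one, mul_div_cancel₀ x ha.ne'] at h
  unfold volterra
  linarith

lemma volterra_pos {a x : ℝ} (ha : 0 < a) (hx : 0 < x) (hne : x ≠ a) : 0 < volterra a x := by
  have hxa : x / a ≠ 1 := fun h => hne ((div_eq_one_iff_eq ha.ne').1 h)
  have h := mul_lt_mul_of_pos_left (log_lt_sub_one_of_pos (div_pos hx ha) hxa) ha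
  rw [log_div hx.ne' ha.ne', mul_sub_one, mul_div_cancel₀ x ha.ne'] at h
  unfold volterra
  linarith

lemma hasDerivAt_volterra (a : ℝ) {x : ℝ} (hx : x ≠ 0) :
    HasDerivAt (volterra a) (1 - a / x) x := by
  rw [div_eq_mul_inv]
  exact ((hasDerivAt_id x).sub_const a).sub (((hasDerivAt_log hx).sub_const (log a)).const_mul a)

lemma exists_pos_le_of_volterra_le {a : ℝ} (ha : 0 < a) (c : ℝ) :
    ∃ m > 0, ∀ x > 0, volterra a x ≤ c → m ≤ x := by
  refine ⟨a * exp (-(c / a) - 1), by positivity, fun x hx hV => ?_⟩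
  have hlog : -(c / a) - 1 ≤ log (x / a) := by
    rw [log_div hx.ne' ha.ne', show -(c / a) - 1 = -(c + a) / a by field_simp; ring,
      div_le_iff₀' ha]
    unfold volterra at hV
    linarith
  calc a * exp (-(c / a) - 1) ≤ a * (x / a) := by
        gcongr; rwa [le_log_iff_exp_le (div_pos hx ha)] at hlog
    _ = x := mul_div_cancel₀ x ha.ne'

theorem tendsto_nhds_of_lyapunov {E : Type*} [TopologicalSpace E] [T2Space E] {K : Set E}
    (hK : IsCompact K) {V D : E → ℝ} (hV : ContinuousOn V K) (hD : ContinuousOn D K) {p : E}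
    (hVp : ∀ x ∈ K, x ≠ p → V p < V x) (hDp : 0 ≤ D p)
    (hDpos : ∀ x ∈ K, x ≠ p → 0 < D x)
    {γ : ℝ → E} (hγK : ∀ t, 0 ≤ t → γ t ∈ K)
    (hγV : ∀ t, 0 ≤ t → HasDerivAt (fun s => V (γ s)) (-D (γ t)) t) :
    Tendsto γ atTop (𝓝 p) := by
  have hD_nonneg : ∀ x ∈ K, 0 ≤ D x := fun x hx => by
    rcases eq_or_ne x p with rfl | hne
    exacts [hDp, (hDpos x hx hne).le]
  have hanti : AntitoneOn (fun t => V (γ t)) (Ici 0) :=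
    antitoneOn_Ici_of_hasDerivAt_nonpos hγV fun t ht => neg_nonpos.2 (hD_nonneg _ (hγK t ht))
  rw [tendsto_nhds]
  intro U hU hpU
  rcases (K \ U).eq_empty_or_nonempty with hKU | hKU
  · filter_upwards [eventually_ge_atTop 0] with t ht
    by_contra hγU
    exact hKU.subset ⟨hγK t ht, hγU⟩
  obtain ⟨q, hqKU, hq⟩ := (hK.diff hU).exists_isMinOn hKU (hV.mono sdiff_subset)
  have hpq : V p < V q := hVp q hqKU.1 fun h => hqKU.2 (h ▸ hpU)
  -- Once `V ∘ γ` drops below `V q = min (K \ U) V`, the trajectory stays in `U`.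
  suffices ∃ t₀, 0 ≤ t₀ ∧ V (γ t₀) < V q by
    obtain ⟨t₀, ht₀, hlt⟩ := this
    filter_upwards [eventually_ge_atTop t₀] with t ht
    by_contra hγU
    have h1 : V q ≤ V (γ t) := hq ⟨hγK t (ht₀.trans ht), hγU⟩
    have h2 : V (γ t) ≤ V (γ t₀) := hanti ht₀ (ht₀.trans ht) ht
    linarith
  by_contra! hge
  set Kq := K ∩ V ⁻¹' Ici (V q)
  have hKq : IsCompact Kq :=
    hK.of_isClosed_subset (hV.preimage_isClosed_of_isClosed hK.isClosed isClosed_Ici)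
      inter_subset_left
  obtain ⟨r, hrKq, hr⟩ := hKq.exists_isMinOn ⟨γ 0, hγK 0 le_rfl, hge 0 le_rfl⟩
    (hD.mono inter_subset_left)
  have hδ : 0 < D r := hDpos r hrKq.1 fun h => (h ▸ hrKq.2 : V q ≤ V p).not_gt hpq
  -- Away from `p`, `D` is bounded below, so `V ∘ γ` decreases at least linearly.
  have hlin : AntitoneOn (fun t => V (γ t) + D r * t) (Ici 0) := by
    refine antitoneOn_Ici_of_hasDerivAt_nonpos
      (fun t ht => ((hγV t ht).add ((hasDerivAt_id t).const_mul (D r)))) fun t ht => ?_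
    have : D r ≤ D (γ t) := hr ⟨hγK t ht, hge t ht⟩
    linarith
  set T := (V (γ 0) - V q + 1) / D r
  have hT : 0 ≤ T := div_nonneg (by linarith [hge 0 le_rfl]) hδ.le
  have h1 := hlin self_mem_Ici hT hT
  have h2 := hge T hT
  have h3 : D r * T = V (γ 0) - V q + 1 := mul_div_cancel₀ _ hδ.ne'
  simp only [mul_zero, add_zero] at h1
  linarith

namespace SIR

variable (k : ℝ) (f : ℝ → ℝ)

def defect (y : ℝ) : ℝ := k * (k - 1) - f y * ((k - 1) - k * y)

def dissipation (Rs : ℝ) (p : ℝ × ℝ) : ℝ :=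
  f p.2 * ((k - 1) * p.1 - p.2) ^ 2 + (p.2 - Rs) * defect k f p.2

noncomputable def potential (Rs y : ℝ) : ℝ := ∫ s in Rs..y, (defect k f s + f s * (s - Rs))

noncomputable def lyapunov (Rs : ℝ) (p : ℝ × ℝ) : ℝ :=
  (k - 1) ^ 2 * volterra (Rs / (k - 1)) p.1 + potential k f Rs p.2

variable {k f} {Rs : ℝ}

lemma defect_eq_zero_iff (hk : k ≠ 0) {y : ℝ} (hy : y ≠ (k - 1) / k) :
    defect k f y = 0 ↔ f y = (k - 1) / ((k - 1) / k - y) := by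
  rw [eq_div_iff (sub_ne_zero.2 hy.symm), defect, sub_eq_zero, eq_comm]
  constructor <;> intro h
  · field_simp; linarith
  · field_simp at h; linarith

lemma defect_sign (hk : 1 < k) (hf : Continuous f) (hf_pos : ∀ y, 0 < f y) (hf0 : k < f 0)
    (huniq : ∀ z ∈ Ioo 0 ((k - 1) / k), f z = (k - 1) / ((k - 1) / k - z) → z = Rs)
    {y : ℝ} (hy : 0 ≤ y) (hne : y ≠ Rs) : 0 < (y - Rs) * defect k f y := by
  have hk0 : 0 < k := by linarith
  have hzero : ∀ z, 0 ≤ z → z ≠ Rs → defect k f z ≠ 0 := by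
    intro z hz hzR h0
    rcases hz.eq_or_lt with rfl | hz
    · simp only [defect] at h0
      nlinarith
    rcases lt_or_ge z ((k - 1) / k) with hz' | hz'
    · exact hzR (huniq z ⟨hz, hz'⟩ ((defect_eq_zero_iff hk0.ne' hz'.ne).1 h0))
    · rw [div_le_iff₀ hk0] at hz'
      simp only [defect] at h0
      nlinarith [hf_pos z]
  have hcont : Continuous (defect k f) := by unfold defect; fun_prop
  rcases hne.lt_or_gt with hlt | hgt
  · have h0 : 0 < -defect k f 0 := by simp only [defect]; nlinarith
    have := isPreconnected_Icc.pos_of_forall_ne_zero hcont.neg.continuousOn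
      (fun z hz => neg_ne_zero.2 (hzero z hz.1 (hz.2.trans_lt hlt).ne))
      (left_mem_Icc.2 hy) (right_mem_Icc.2 hy) h0
    exact mul_pos_of_neg_of_neg (sub_neg.2 hlt) (neg_pos.1 this)
  · set b := y + (k - 1) / k
    have hb : 0 < defect k f b := by
      have : (k - 1) - k * b = -(k * y) := by simp only [b]; field_simp; ring
      simp only [defect, this]
      nlinarith [hf_pos b, mul_nonneg hk0.le hy]
    have hyb : y ≤ b := le_add_of_nonneg_right (div_nonneg (by linarith) hk0.le)
    have := isPreconnected_Icc.pos_of_forall_ne_zero hcont.continuousOn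
      (fun z hz => hzero z (hy.trans hz.1) (hgt.trans_le hz.1).ne')
      (right_mem_Icc.2 hyb) (left_mem_Icc.2 hyb) hb
    exact mul_pos (sub_pos.2 hgt) this


lemma continuous_dissipation (hf : Continuous f) : Continuous (dissipation k f Rs) := by
  unfold dissipation defect; fun_prop

lemma dissipation_equilibrium (hk : k ≠ 1) : dissipation k f Rs (Rs / (k - 1), Rs) = 0 := by
  simp [dissipation, mul_div_cancel₀ _ (sub_ne_zero.2 hk)]

lemma dissipation_pos (hk : k ≠ 1) (hf_pos : ∀ y, 0 < f y)
    (hsign : ∀ y, 0 ≤ y → y ≠ Rs → 0 < (y - Rs) * defect k f y)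
    {p : ℝ × ℝ} (hp : 0 ≤ p.2) (hne : p ≠ (Rs / (k - 1), Rs)) :
    0 < dissipation k f Rs p := by
  obtain ⟨x, y⟩ := p
  unfold dissipation
  rcases eq_or_ne y Rs with rfl | hy
  · have hx : (k - 1) * x - y ≠ 0 := fun h => hne <| Prod.ext (by
      show x = y / (k - 1)
      rw [eq_div_iff (sub_ne_zero.2 hk)]; linarith) rfl
    simp only [sub_self, zero_mul, add_zero]
    exact mul_pos (hf_pos y) (sq_pos_of_ne_zero hx)
  · exact add_pos_of_nonneg_of_pos (mul_nonneg (hf_pos y).le (sq_nonneg _)) (hsign y hp hy)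

lemma dissipation_nonneg (hk : k ≠ 1) (hf_pos : ∀ y, 0 < f y)
    (hsign : ∀ y, 0 ≤ y → y ≠ Rs → 0 < (y - Rs) * defect k f y)
    {p : ℝ × ℝ} (hp : 0 ≤ p.2) : 0 ≤ dissipation k f Rs p := by
  rcases eq_or_ne p (Rs / (k - 1), Rs) with rfl | hne
  · exact (dissipation_equilibrium hk).ge
  · exact (dissipation_pos hk hf_pos hsign hp hne).le

lemma hasDerivAt_potential (hf : Continuous f) (y : ℝ) :
    HasDerivAt (potential k f Rs) (defect k f y + f y * (y - Rs)) y := by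
  have hφ : Continuous fun s => defect k f s + f s * (s - Rs) := by unfold defect; fun_prop
  exact (hφ.integral_hasStrictDerivAt Rs y).hasDerivAt

lemma potential_pos (hf : Continuous f) (hf_pos : ∀ y, 0 < f y)
    (hsign : ∀ y, 0 ≤ y → y ≠ Rs → 0 < (y - Rs) * defect k f y) (hRs : 0 ≤ Rs)
    {y : ℝ} (hy : 0 ≤ y) (hne : y ≠ Rs) : 0 < potential k f Rs y := by
  have h := lt_of_hasDerivAt_of_sub_mul_pos (fun s _ => hasDerivAt_potential hf s) hne
    fun s hs hsR => by
      have hs0 : 0 ≤ s := (le_min hRs hy).trans hs.1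
      rw [mul_add, show (s - Rs) * (f s * (s - Rs)) = f s * (s - Rs) ^ 2 by ring]
      exact add_pos_of_pos_of_nonneg (hsign s hs0 hsR) (mul_nonneg (hf_pos s).le (sq_nonneg _))
  simpa [potential] using h

lemma continuousOn_lyapunov (hf : Continuous f) :
    ContinuousOn (lyapunov k f Rs) {p | p.1 ≠ 0} := fun p hp =>
  (((hasDerivAt_volterra _ hp).continuousAt.comp continuous_fst.continuousAt).const_mul _).add
    ((hasDerivAt_potential hf p.2).continuousAt.comp continuous_snd.continuousAt)
    |>.continuousWithinAt

@[simp] lemma lyapunov_equilibrium : lyapunov k f Rs (Rs / (k - 1), Rs) = 0 := by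
  simp [lyapunov, potential]

lemma lyapunov_pos (hk : 1 < k) (hf : Continuous f) (hf_pos : ∀ y, 0 < f y)
    (hsign : ∀ y, 0 ≤ y → y ≠ Rs → 0 < (y - Rs) * defect k f y) (hRs : 0 < Rs)
    {p : ℝ × ℝ} (hp1 : 0 < p.1) (hp2 : 0 ≤ p.2) (hne : p ≠ (Rs / (k - 1), Rs)) :
    0 < lyapunov k f Rs p := by
  obtain ⟨x, y⟩ := p
  have ha : 0 < Rs / (k - 1) := div_pos hRs (by linarith)
  have hk2 : 0 < (k - 1) ^ 2 := by nlinarith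
  unfold lyapunov
  rcases eq_or_ne y Rs with rfl | hy
  · have hx : x ≠ y / (k - 1) := fun h => hne (by rw [h])
    simp only [potential, intervalIntegral.integral_same, add_zero]
    exact mul_pos hk2 (volterra_pos ha hp1 hx)
  · exact add_pos_of_nonneg_of_pos (mul_nonneg hk2.le (volterra_nonneg ha hp1))
      (potential_pos hf hf_pos hsign hRs.le hp2 hy)

lemma exists_pos_le_fst_of_lyapunov_le (hk : 1 < k) (hf : Continuous f) (hf_pos : ∀ y, 0 < f y)
    (hsign : ∀ y, 0 ≤ y → y ≠ Rs → 0 < (y - Rs) * defect k f y) (hRs : 0 < Rs) (c : ℝ) :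
    ∃ m > 0, ∀ p : ℝ × ℝ, 0 < p.1 → 0 ≤ p.2 → lyapunov k f Rs p ≤ c → m ≤ p.1 := by
  have hk2 : 0 < (k - 1) ^ 2 := by nlinarith
  obtain ⟨m, hm, h⟩ := exists_pos_le_of_volterra_le (div_pos hRs (by linarith : 0 < k - 1))
    (c / (k - 1) ^ 2)
  refine ⟨m, hm, fun ⟨x, y⟩ hx hy hV => h x hx ?_⟩
  have hΦ : 0 ≤ potential k f Rs y := by
    rcases eq_or_ne y Rs with rfl | hne
    · simp [potential]
    · exact (potential_pos hf hf_pos hsign hRs.le hy hne).le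
  rw [le_div_iff₀' hk2]
  unfold lyapunov at hV
  linarith

lemma hasDerivAt_lyapunov_comp (hk : k ≠ 1) (hf : Continuous f) {I R : ℝ → ℝ} {t : ℝ}
    (hIt : 0 < I t) (hI : HasDerivAt I (I t * (f (R t) * (1 - I t - R t) - k)) t)
    (hR : HasDerivAt R ((k - 1) * I t - R t) t) :
    HasDerivAt (fun s => lyapunov k f Rs (I s, R s)) (-dissipation k f Rs (I t, R t)) t := by
  refine HasDerivAt.congr_deriv ((((hasDerivAt_volterra _ hIt.ne').comp t hI).const_mul _).add
    ((hasDerivAt_potential hf (R t)).comp t hR)) ?_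
  have hk1 : k - 1 ≠ 0 := sub_ne_zero.2 hk
  simp only [dissipation, defect]
  field_simp
  ring

lemma invariant_region (hk : 1 < k) (hf : Continuous f) {I R : ℝ → ℝ}
    (hI : Differentiable ℝ I) (hR : Differentiable ℝ R)
    (hIode : ∀ t, 0 ≤ t → deriv I t = I t * (f (R t) * (1 - I t - R t) - k))
    (hRode : ∀ t, 0 ≤ t → deriv R t = (k - 1) * I t - R t)
    (hI0 : 0 < I 0) (hR0 : 0 ≤ R 0) (hsum : I 0 + R 0 ≤ 1) :
    ∀ t, 0 ≤ t → 0 < I t ∧ 0 ≤ R t ∧ I t + R t ≤ 1 := by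
  have hIc := hI.continuous
  have hRc := hR.continuous
  have hI' : ∀ t, 0 ≤ t → HasDerivAt I (I t * (f (R t) * (1 - I t - R t) - k)) t :=
    fun t ht => hIode t ht ▸ (hI t).hasDerivAt
  have hR' : ∀ t, 0 ≤ t → HasDerivAt R ((k - 1) * I t - R t) t :=
    fun t ht => hRode t ht ▸ (hR t).hasDerivAt
  have hIpos : ∀ t, 0 ≤ t → 0 < I t := fun t ht =>
    (mul_pos hI0 (exp_pos _)).trans_le <| mul_exp_integral_le_of_hasDerivAt
      (a := fun s => f (R s) * (1 - I s - R s) - k) (b := 0) (by fun_prop)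
      (fun s hs => (hI' s hs).congr_deriv (by simp only [Pi.zero_apply]; ring))
      (fun _ _ => le_rfl) ht
  have hRnn : ∀ t, 0 ≤ t → 0 ≤ R t := fun t ht =>
    (mul_nonneg hR0 (exp_pos _).le).trans <| mul_exp_integral_le_of_hasDerivAt
      (a := fun _ => -1) (b := fun s => (k - 1) * I s) continuous_const
      (fun s hs => (hR' s hs).congr_deriv (by ring))
      (fun s hs => mul_nonneg (by linarith) (hIpos s hs).le) ht
  have hS : ∀ t, 0 ≤ t → 0 ≤ 1 - I t - R t := fun t ht =>
    (mul_nonneg (by linarith) (exp_pos _).le).trans <| mul_exp_integral_le_of_hasDerivAt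
      (u := fun s => 1 - I s - R s) (a := fun s => -(f (R s) * I s)) (b := fun s => I s + R s)
      (by fun_prop)
      (fun s hs => (((hasDerivAt_const s 1).sub (hI' s hs)).sub (hR' s hs)).congr_deriv (by ring))
      (fun s hs => add_nonneg (hIpos s hs).le (hRnn s hs)) ht
  exact fun t ht => ⟨hIpos t ht, hRnn t ht, by linarith [hS t ht]⟩

end SIR

theorem sir_endemic_equilibrium_globally_stable_general
    (k : ℝ) (hk : 1 < k)
    (f : ℝ → ℝ) (hf_pos : ∀ x, 0 < f x) (hf_smooth : ContDiff ℝ 1 f)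
    (hf0 : k < f 0)
    (g : ℝ → ℝ) (hg : ∀ R, g R = (k - 1) / ((k - 1) / k - R))
    (Rstar : ℝ) (hRstar : Rstar ∈ Set.Ioo (0 : ℝ) ((k - 1) / k))
    (huniq : ∀ R' ∈ Set.Ioo (0 : ℝ) ((k - 1) / k), f R' = g R' → R' = Rstar)
    (Istar : ℝ) (hIstar : Istar = Rstar / (k - 1))
    (I R : ℝ → ℝ)
    (hI : Differentiable ℝ I) (hR : Differentiable ℝ R)
    (hIode : ∀ t, 0 ≤ t → deriv I t = I t * (f (R t) * (1 - I t - R t) - k))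
    (hRode : ∀ t, 0 ≤ t → deriv R t = (k - 1) * I t - R t)
    (hI0 : 0 < I 0) (hR0 : 0 ≤ R 0) (hsum : I 0 + R 0 ≤ 1) :
    Filter.Tendsto (fun t => (I t, R t)) Filter.atTop (nhds (Istar, Rstar)) := by
  subst hIstar
  have hf := hf_smooth.continuous
  have hsign : ∀ y, 0 ≤ y → y ≠ Rstar → 0 < (y - Rstar) * SIR.defect k f y :=
    fun y => SIR.defect_sign hk hf hf_pos hf0 fun z hz h => huniq z hz (h.trans (hg z).symm)
  have hinv := SIR.invariant_region hk hf hI hR hIode hRode hI0 hR0 hsum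
  have hV : ∀ t, 0 ≤ t → HasDerivAt (fun s => SIR.lyapunov k f Rstar (I s, R s))
      (-SIR.dissipation k f Rstar (I t, R t)) t := fun t ht =>
    SIR.hasDerivAt_lyapunov_comp hk.ne' hf (hinv t ht).1 (hIode t ht ▸ (hI t).hasDerivAt)
      (hRode t ht ▸ (hR t).hasDerivAt)
  have hanti : AntitoneOn (fun t => SIR.lyapunov k f Rstar (I t, R t)) (Ici 0) :=
    antitoneOn_Ici_of_hasDerivAt_nonpos hV fun t ht =>
      neg_nonpos.2 (SIR.dissipation_nonneg hk.ne' hf_pos hsign (hinv t ht).2.1)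
  obtain ⟨m, hm, hmI⟩ := SIR.exists_pos_le_fst_of_lyapunov_le hk hf hf_pos hsign hRstar.1
    (SIR.lyapunov k f Rstar (I 0, R 0))
  have hK : ∀ t, 0 ≤ t → (I t, R t) ∈ Icc m 1 ×ˢ Icc 0 1 := fun t ht => by
    obtain ⟨hIt, hRt, hIR⟩ := hinv t ht
    exact ⟨⟨hmI _ hIt hRt (hanti self_mem_Ici ht ht), by linarith⟩, hRt, by linarith⟩
  exact tendsto_nhds_of_lyapunov (isCompact_Icc.prod isCompact_Icc)
    ((SIR.continuousOn_lyapunov hf).mono fun p hp => (hm.trans_le hp.1.1).ne')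
    (SIR.continuous_dissipation hf).continuousOn
    (fun p hp hne => by
      rw [SIR.lyapunov_equilibrium]
      exact SIR.lyapunov_pos hk hf hf_pos hsign hRstar.1 (hm.trans_le hp.1.1) hp.2.1 hne)
    (SIR.dissipation_nonneg hk.ne' hf_pos hsign hRstar.1.le)
    (fun p hp hne => SIR.dissipation_pos hk.ne' hf_pos hsign hp.2.1 hne) hK hV

/-- Global stability of a unique endemic equilibrium: if f(0) > k, the endemic
equilibrium (I*, R*) is unique and f'(R*) ≠ g'(R*), then every solution with
I(0) > 0 converges to (I*, R*). -/
theorem sir_endemic_equilibrium_globally_stable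
    (k : ℝ) (hk : 1 < k)
    (f : ℝ → ℝ) (hf_pos : ∀ x, 0 < f x) (hf_smooth : ContDiff ℝ 1 f)
    (hf0 : k < f 0)
    (g : ℝ → ℝ) (hg : ∀ R, g R = (k - 1) / ((k - 1) / k - R))
    (Rstar : ℝ) (hRstar : Rstar ∈ Set.Ioo (0 : ℝ) ((k - 1) / k))
    (hfg : f Rstar = g Rstar)
    (huniq : ∀ R' ∈ Set.Ioo (0 : ℝ) ((k - 1) / k), f R' = g R' → R' = Rstar)
    (Istar : ℝ) (hIstar : Istar = Rstar / (k - 1))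
    (hderiv_ne : deriv f Rstar ≠ deriv g Rstar)
    (I R : ℝ → ℝ)
    (hI : Differentiable ℝ I) (hR : Differentiable ℝ R)
    (hIode : ∀ t, 0 ≤ t → deriv I t = I t * (f (R t) * (1 - I t - R t) - k))
    (hRode : ∀ t, 0 ≤ t → deriv R t = (k - 1) * I t - R t)
    (hI0 : 0 < I 0) (hR0 : 0 ≤ R 0) (hsum : I 0 + R 0 ≤ 1) :
    Filter.Tendsto (fun t => (I t, R t)) Filter.atTop (nhds (Istar, Rstar)) :=
  sir_endemic_equilibrium_globally_stable_general k hk f hf_pos hf_smooth hf0 g hg Rstar hRstar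
    huniq Istar hIstar I R hI hR hIode hRode hI0 hR0 hsum
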